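/- arXiv:2509.01196 — 4 statements merged into one kernel-verified Lean document; each statement's English description precedes it below -/
import Mathlib

section
/- Let p : ℝ → ℝ be C¹ on [0,∞), nonnegative, nondecreasing, convex, and strictly convex near 1 in the sense that p'(1) > 0. Define e(ρ) = ρ ∫₁^ρ p(s)/s² ds − p(1)(ρ − 1). Then for every ρ* > 1 there exist constants c, C > 0 such that c(ρ − 1)² ≤ e(ρ) ≤ C(ρ − 1)² for all ρ ∈ [0, ρ*]. -/
/-!
For `ρ > 0`, `e(ρ) = ρ ∫₁^ρ (p(s) - p(1)) / s² ds`. By convexity, for `s ∈ [0, ρ*]` the secant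
slope `(p(s) - p(1)) / (s - 1)` lies between `p(1) - p(0)` and `(p(ρ*) - p(1)) / (ρ* - 1)`, and
`p(1) - p(0) > 0` since `p` is nondecreasing with `p'(1) > 0`. Integrating these linear bounds
against `1 / s²` gives both inequalities; comparing with `1 - 1/s²`, whose antiderivative is
`(s - 1)² / s`, avoids logarithms. At `ρ = 0` the formula reads `e(0) = p(1)`.
-/

open Set MeasureTheory

theorem intervalIntegrable_div_sq {f : ℝ → ℝ} {a b : ℝ} (hf : ContinuousOn f (Ioi 0))
    (ha : 0 < a) (hb : 0 < b) : IntervalIntegrable (fun s => f s / s ^ 2) volume a b := by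
  have hsub : uIcc a b ⊆ Ioi 0 := ordConnected_Ioi.uIcc_subset ha hb
  exact ((hf.mono hsub).div (continuousOn_pow 2) fun s hs =>
    pow_ne_zero 2 (mem_Ioi.1 (hsub hs)).ne').intervalIntegrable

theorem integral_one_div_sq {a b : ℝ} (ha : 0 < a) (hb : 0 < b) :
    ∫ s in a..b, 1 / s ^ 2 = 1 / a - 1 / b := by
  have hpos : uIcc a b ⊆ Ioi 0 := ordConnected_Ioi.uIcc_subset ha hb
  rw [intervalIntegral.integral_eq_sub_of_hasDerivAt (f := fun s => -(1 / s))
    (fun s hs => by simpa [one_div] using (hasDerivAt_inv (mem_Ioi.1 (hpos hs)).ne').fun_neg)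
    (intervalIntegrable_div_sq continuousOn_const ha hb)]
  ring

theorem integral_one_sub_one_div_sq {ρ : ℝ} (hρ : 0 < ρ) :
    ∫ s in (1:ℝ)..ρ, (1 - 1 / s ^ 2) = (ρ - 1) ^ 2 / ρ := by
  rw [intervalIntegral.integral_sub intervalIntegrable_const
    (intervalIntegrable_div_sq continuousOn_const one_pos hρ), integral_one,
    integral_one_div_sq one_pos hρ]
  field_simp

theorem mul_integral_div_sq_sub_eq {p : ℝ → ℝ} {ρ : ℝ} (hρ : 0 < ρ)
    (hint : IntervalIntegrable (fun s => p s / s ^ 2) volume 1 ρ) :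
    ρ * (∫ s in (1:ℝ)..ρ, p s / s ^ 2) - p 1 * (ρ - 1) =
      ρ * ∫ s in (1:ℝ)..ρ, (p s - p 1) / s ^ 2 := by
  have hconst : ∫ s in (1:ℝ)..ρ, p 1 / s ^ 2 = p 1 * (1 - 1 / ρ) := by
    simp_rw [div_eq_mul_one_div (p 1)]
    rw [intervalIntegral.integral_const_mul, integral_one_div_sq one_pos hρ, div_one]
  simp_rw [sub_div]
  rw [intervalIntegral.integral_sub hint
    (intervalIntegrable_div_sq continuousOn_const one_pos hρ), hconst]
  field_simp

theorem abs_mul_integral_div_sq_le {q : ℝ → ℝ} {ρ L : ℝ} (hρ : 0 < ρ)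
    (hq : ∀ s ∈ uIcc 1 ρ, |q s| ≤ L) :
    |ρ * ∫ s in (1:ℝ)..ρ, q s / s ^ 2| ≤ L * |ρ - 1| := by
  have hL : 0 ≤ L := (abs_nonneg _).trans (hq 1 left_mem_uIcc)
  have hbound : |∫ s in (1:ℝ)..ρ, q s / s ^ 2| ≤ |∫ s in (1:ℝ)..ρ, L / s ^ 2| := by
    refine intervalIntegral.norm_integral_le_abs_of_norm_le (f := fun s => q s / s ^ 2)
      (ae_restrict_of_forall_mem measurableSet_uIoc fun s hs => ?_)
      (intervalIntegrable_div_sq continuousOn_const one_pos hρ)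
    have hs0 : 0 < s ^ 2 :=
      pow_pos (ordConnected_Ioi.uIcc_subset one_pos hρ (uIoc_subset_uIcc hs)) 2
    rw [Real.norm_eq_abs, abs_div, abs_of_pos hs0]
    exact div_le_div_of_nonneg_right (hq s (uIoc_subset_uIcc hs)) hs0.le
  have hconst : ∫ s in (1:ℝ)..ρ, L / s ^ 2 = L * (ρ - 1) / ρ := by
    simp_rw [div_eq_mul_one_div L]
    rw [intervalIntegral.integral_const_mul, integral_one_div_sq one_pos hρ]
    field_simp
  rw [hconst, abs_div, abs_mul, abs_of_pos hρ, abs_of_nonneg hL] at hbound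
  rw [abs_mul, abs_of_pos hρ]
  calc ρ * |∫ s in (1:ℝ)..ρ, q s / s ^ 2| ≤ ρ * (L * |ρ - 1| / ρ) := by gcongr
    _ = L * |ρ - 1| := by field_simp

theorem le_mul_integral_div_sq_of_one_le {q : ℝ → ℝ} {ρ k : ℝ} (hρ : 1 ≤ ρ) (hk : 0 ≤ k)
    (hq : ∀ s ∈ Icc 1 ρ, k * (s - 1) ≤ q s)
    (hint : IntervalIntegrable (fun s => q s / s ^ 2) volume 1 ρ) :
    k * (ρ - 1) ^ 2 / (ρ + 1) ≤ ρ * ∫ s in (1:ℝ)..ρ, q s / s ^ 2 := by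
  have hρ0 : 0 < ρ := by linarith
  have hintegral : ∫ s in (1:ℝ)..ρ, k / (ρ + 1) * (1 - 1 / s ^ 2) ≤
      ∫ s in (1:ℝ)..ρ, q s / s ^ 2 := by
    refine intervalIntegral.integral_mono_on hρ
      ((intervalIntegrable_const.sub
        (intervalIntegrable_div_sq continuousOn_const one_pos hρ0)).const_mul _)
      hint fun s ⟨hs1, hsρ⟩ => ?_
    have hs0 : 0 < s := by linarith
    calc k / (ρ + 1) * (1 - 1 / s ^ 2) = k * (s - 1) * ((s + 1) / (ρ + 1)) / s ^ 2 := by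
          field_simp
          ring
      _ ≤ k * (s - 1) / s ^ 2 := by
          refine div_le_div_of_nonneg_right (mul_le_of_le_one_right
            (mul_nonneg hk (sub_nonneg.2 hs1)) (div_le_one_of_le₀ ?_ ?_)) (sq_nonneg s) <;>
            linarith
      _ ≤ q s / s ^ 2 := by gcongr; exact hq s ⟨hs1, hsρ⟩
  calc k * (ρ - 1) ^ 2 / (ρ + 1) = ρ * ∫ s in (1:ℝ)..ρ, k / (ρ + 1) * (1 - 1 / s ^ 2) := by
        rw [intervalIntegral.integral_const_mul, integral_one_sub_one_div_sq hρ0]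
        field_simp
    _ ≤ ρ * ∫ s in (1:ℝ)..ρ, q s / s ^ 2 := by gcongr

theorem le_mul_integral_div_sq_of_le_one {q : ℝ → ℝ} {ρ k : ℝ} (hρ0 : 0 < ρ) (hρ : ρ ≤ 1)
    (hk : 0 ≤ k) (hq : ∀ s ∈ Icc ρ 1, q s ≤ k * (s - 1))
    (hint : IntervalIntegrable (fun s => q s / s ^ 2) volume 1 ρ) :
    k * (ρ - 1) ^ 2 / 2 ≤ ρ * ∫ s in (1:ℝ)..ρ, q s / s ^ 2 := by
  have hintegral : ∫ s in (1:ℝ)..ρ, k / 2 * (1 - 1 / s ^ 2) ≤ ∫ s in (1:ℝ)..ρ, q s / s ^ 2 := by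
    rw [intervalIntegral.integral_symm ρ 1, intervalIntegral.integral_symm ρ 1, neg_le_neg_iff]
    refine intervalIntegral.integral_mono_on hρ hint.symm
      ((intervalIntegrable_const.sub
        (intervalIntegrable_div_sq continuousOn_const hρ0 one_pos)).const_mul _)
      fun s ⟨hρs, hs1⟩ => ?_
    have hs0 : 0 < s := by linarith
    calc q s / s ^ 2 ≤ k * (s - 1) / s ^ 2 := by gcongr; exact hq s ⟨hρs, hs1⟩
      _ ≤ k * (s - 1) * ((s + 1) / 2) / s ^ 2 := by
          refine div_le_div_of_nonneg_right ?_ (sq_nonneg s)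
          nlinarith [mul_nonneg hk (sub_nonneg.2 hs1)]
      _ = k / 2 * (1 - 1 / s ^ 2) := by
          field_simp
          ring
  calc k * (ρ - 1) ^ 2 / 2 = ρ * ∫ s in (1:ℝ)..ρ, k / 2 * (1 - 1 / s ^ 2) := by
        rw [intervalIntegral.integral_const_mul, integral_one_sub_one_div_sq hρ0]
        field_simp
    _ ≤ ρ * ∫ s in (1:ℝ)..ρ, q s / s ^ 2 := by gcongr

theorem le_mul_integral_div_sq {q : ℝ → ℝ} {ρ R k : ℝ} (hρ : 0 < ρ) (hρR : ρ ≤ R) (hR : 1 ≤ R)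
    (hk : 0 ≤ k) (hq_right : ∀ s ∈ Icc 1 ρ, k * (s - 1) ≤ q s)
    (hq_left : ∀ s ∈ Icc ρ 1, q s ≤ k * (s - 1))
    (hint : IntervalIntegrable (fun s => q s / s ^ 2) volume 1 ρ) :
    k / (R + 1) * (ρ - 1) ^ 2 ≤ ρ * ∫ s in (1:ℝ)..ρ, q s / s ^ 2 := by
  rw [div_mul_eq_mul_div]
  rcases le_total 1 ρ with h1 | h1
  · calc k * (ρ - 1) ^ 2 / (R + 1) ≤ k * (ρ - 1) ^ 2 / (ρ + 1) := by gcongr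
      _ ≤ _ := le_mul_integral_div_sq_of_one_le h1 hk hq_right hint
  · calc k * (ρ - 1) ^ 2 / (R + 1) ≤ k * (ρ - 1) ^ 2 / 2 := by gcongr; linarith
      _ ≤ _ := le_mul_integral_div_sq_of_le_one hρ h1 hk hq_left hint

theorem MonotoneOn.lt_of_deriv_pos {f : ℝ → ℝ} {a b : ℝ} (hf : MonotoneOn f (Icc a b))
    (hab : a < b) (hb : 0 < deriv f b) : f a < f b := by
  have hslope :=
    hasDerivAt_iff_tendsto_slope.1 (differentiableAt_of_deriv_ne_zero hb.ne').hasDerivAt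
  obtain ⟨s, hs_pos, hs⟩ := ((hslope.eventually (lt_mem_nhds hb)).filter_mono
    (nhdsLT_le_nhdsNE b) |>.and (Ioo_mem_nhdsLT hab)).exists
  rw [slope_def_field, lt_div_iff_of_neg (by linarith [hs.2]), zero_mul] at hs_pos
  exact (hf (left_mem_Icc.2 hab.le) ⟨hs.1.le, hs.2.le⟩ hs.1.le).trans_lt (by linarith)

section Secant

variable {p : ℝ → ℝ} {s : ℝ}

theorem ConvexOn.sub_le_secant_one (hp : ConvexOn ℝ (Ici 0) p) (hs : 0 ≤ s) (hs1 : s ≠ 1) :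
    p 1 - p 0 ≤ (p s - p 1) / (s - 1) := by
  have := hp.secant_mono (mem_Ici.2 zero_le_one) self_mem_Ici (mem_Ici.2 hs) zero_ne_one hs1 hs
  rwa [zero_sub, div_neg, div_one, neg_sub] at this

theorem ConvexOn.mul_sub_one_le_sub (hp : ConvexOn ℝ (Ici 0) p) (hs : 1 ≤ s) :
    (p 1 - p 0) * (s - 1) ≤ p s - p 1 := by
  rcases hs.eq_or_lt with rfl | hs
  · simp
  exact (le_div_iff₀ (sub_pos.2 hs)).1 (hp.sub_le_secant_one (by linarith) hs.ne')

theorem ConvexOn.sub_le_mul_sub_one (hp : ConvexOn ℝ (Ici 0) p) (hs0 : 0 ≤ s) (hs : s ≤ 1) :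
    p s - p 1 ≤ (p 1 - p 0) * (s - 1) := by
  rcases hs.eq_or_lt with rfl | hs
  · simp
  exact (le_div_iff_of_neg (sub_neg.2 hs)).1 (hp.sub_le_secant_one hs0 hs.ne)

theorem ConvexOn.abs_sub_le {R : ℝ} (hp : ConvexOn ℝ (Ici 0) p) (hp01 : p 0 ≤ p 1) (hR : 1 < R)
    (hs0 : 0 ≤ s) (hsR : s ≤ R) : |p s - p 1| ≤ (p R - p 1) / (R - 1) * |s - 1| := by
  rcases eq_or_ne s 1 with rfl | hs1
  · simp
  have hsecant : (p s - p 1) / (s - 1) ≤ (p R - p 1) / (R - 1) :=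
    hp.secant_mono (mem_Ici.2 zero_le_one) (mem_Ici.2 hs0) (mem_Ici.2 (by linarith)) hs1
      hR.ne' hsR
  have hnonneg := (sub_nonneg.2 hp01).trans (hp.sub_le_secant_one hs0 hs1)
  calc |p s - p 1| = (p s - p 1) / (s - 1) * |s - 1| := by
        rw [← abs_of_nonneg hnonneg, ← abs_mul, div_mul_cancel₀ _ (sub_ne_zero.2 hs1)]
    _ ≤ (p R - p 1) / (R - 1) * |s - 1| := by gcongr

end Secant

theorem stmt1_general (p e : ℝ → ℝ)
    (hpnn : ∀ s ∈ Ici (0:ℝ), 0 ≤ p s)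
    (hpmono : MonotoneOn p (Ici 0))
    (hpconv : ConvexOn ℝ (Ici 0) p)
    (hp'1 : 0 < deriv p 1)
    (he : ∀ ρ : ℝ,
      e ρ = ρ * (∫ s in (1:ℝ)..ρ, p s / s ^ 2) - p 1 * (ρ - 1)) :
    ∀ ρstar : ℝ, 1 < ρstar → ∃ c C : ℝ, 0 < c ∧ 0 < C ∧
      ∀ ρ ∈ Icc (0:ℝ) ρstar, c * (ρ - 1) ^ 2 ≤ e ρ ∧ e ρ ≤ C * (ρ - 1) ^ 2 := by
  intro R hR
  set k := p 1 - p 0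
  set K := (p R - p 1) / (R - 1)
  have hk : 0 < k := sub_pos.2 ((hpmono.mono Icc_subset_Ici_self).lt_of_deriv_pos one_pos hp'1)
  have hkK : k ≤ K := (le_div_iff₀ (by linarith)).2 (hpconv.mul_sub_one_le_sub hR.le)
  have hcont : ContinuousOn p (Ioi 0) := by simpa using hpconv.continuousOn_interior
  refine ⟨k / (R + 1), max K (p 1), by positivity, lt_max_of_lt_left (hk.trans_le hkK), ?_⟩
  rintro ρ ⟨hρ0, hρR⟩
  rcases hρ0.eq_or_lt with rfl | hρ
  · have he0 : e 0 = p 1 := by rw [he]; ring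
    have hk_le : k / (R + 1) ≤ k := div_le_self hk.le (by linarith)
    rw [he0, zero_sub, neg_one_sq, mul_one, mul_one]
    exact ⟨by linarith [hpnn 0 self_mem_Ici], le_max_right _ _⟩
  have hint := intervalIntegrable_div_sq (f := fun s => p s - p 1)
    (hcont.sub continuousOn_const) one_pos hρ
  rw [he, mul_integral_div_sq_sub_eq hρ (intervalIntegrable_div_sq hcont one_pos hρ)]
  refine ⟨?_, ?_⟩
  · exact le_mul_integral_div_sq hρ hρR hR.le hk.le
      (fun s hs => hpconv.mul_sub_one_le_sub hs.1)
      (fun s hs => hpconv.sub_le_mul_sub_one (hρ.le.trans hs.1) hs.2) hint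
  · have hsub : uIcc 1 ρ ⊆ Icc 0 R :=
      ordConnected_Icc.uIcc_subset ⟨zero_le_one, hR.le⟩ ⟨hρ0, hρR⟩
    calc ρ * ∫ s in (1:ℝ)..ρ, (p s - p 1) / s ^ 2
        ≤ |ρ * ∫ s in (1:ℝ)..ρ, (p s - p 1) / s ^ 2| := le_abs_self _
      _ ≤ K * |ρ - 1| * |ρ - 1| := abs_mul_integral_div_sq_le hρ fun s hs =>
          (hpconv.abs_sub_le (sub_nonneg.1 hk.le) hR (hsub hs).1 (hsub hs).2).trans
            (mul_le_mul_of_nonneg_left (abs_sub_left_of_mem_uIcc hs) (hk.le.trans hkK))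
      _ = K * (ρ - 1) ^ 2 := by rw [mul_assoc, abs_mul_abs_self, sq]
      _ ≤ max K (p 1) * (ρ - 1) ^ 2 := by gcongr; exact le_max_left _ _

/-- For a nonnegative, nondecreasing, convex C¹ pressure with `p'(1) > 0`, the
potential energy `e(ρ) = ρ∫₁^ρ p(s)/s² ds − p(1)(ρ−1)` is equivalent to `(ρ−1)²` on any
bounded density range `[0, ρ*]` with `ρ* > 1`. -/
theorem stmt1 (p e : ℝ → ℝ)
    (hp : ContDiffOn ℝ 1 p (Ici 0))
    (hpnn : ∀ s ∈ Ici (0:ℝ), 0 ≤ p s)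
    (hpmono : MonotoneOn p (Ici 0))
    (hpconv : ConvexOn ℝ (Ici 0) p)
    (hp'1 : 0 < deriv p 1)
    (he : ∀ ρ : ℝ,
      e ρ = ρ * (∫ s in (1:ℝ)..ρ, p s / s ^ 2) - p 1 * (ρ - 1)) :
    ∀ ρstar : ℝ, 1 < ρstar → ∃ c C : ℝ, 0 < c ∧ 0 < C ∧
      ∀ ρ ∈ Icc (0:ℝ) ρstar, c * (ρ - 1) ^ 2 ≤ e ρ ∧ e ρ ≤ C * (ρ - 1) ^ 2 :=
  stmt1_general p e hpnn hpmono hpconv hp'1 he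
end

section
/- Let Ω = (0,1), ρ ∈ L^∞(Ω) with 0 ≤ ρ ≤ ρ̄, ∫₀¹ ρ dx = 1, ∫₀¹ ρ u dx = 0, and u ∈ H¹₀(Ω). Then ‖√ρ · u‖_{L²(Ω)} ≤ (√ρ̄ + ρ̄) ‖∂ₓ u‖_{L²(Ω)}. -/
/-!
Since `u 0 = 0`, the fundamental theorem of calculus and Cauchy–Schwarz give
`u x ^ 2 ≤ x * ∫₀ˣ u' ^ 2 ≤ ‖u'‖²` for `x ∈ (0,1)`. Averaging this pointwise bound against the
probability density `ρ` yields `‖√ρ u‖ ≤ ‖u'‖`, and unit mass on an interval of length one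
forces `ρ̄ ≥ 1`, so that `√ρ̄ + ρ̄ ≥ 1`.
-/

open Real Set MeasureTheory

theorem sq_setIntegral_le_measureReal_mul_setIntegral_sq {α : Type*} [MeasurableSpace α]
    {μ : Measure α} {s : Set α} (hs : μ s ≠ ⊤) {f : α → ℝ}
    (hf : IntegrableOn (fun x => f x ^ 2) s μ) :
    (∫ x in s, f x ∂μ) ^ 2 ≤ μ.real s * ∫ x in s, f x ^ 2 ∂μ := by
  have hJ : 0 ≤ ∫ x in s, f x ^ 2 ∂μ := integral_nonneg fun x => sq_nonneg (f x)
  by_cases hfi : IntegrableOn f s μ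
  swap
  -- the Bochner integral of a non-integrable function is `0`
  · rw [integral_undef hfi]
    simp only [ne_eq, OfNat.ofNat_ne_zero, not_false_eq_true, zero_pow]
    positivity
  rcases eq_or_ne (μ s) 0 with h0 | h0
  · simp [Measure.restrict_eq_zero.2 h0]
  have hm : 0 < μ.real s := ENNReal.toReal_pos h0 hs
  have hjensen := (even_two.convexOn_pow : ConvexOn ℝ univ (· ^ 2)).map_set_average_le
    (continuous_pow 2).continuousOn isClosed_univ h0 hs (by simp) hfi hf
  simp only [setAverage_eq, smul_eq_mul] at hjensen
  rw [mul_pow, inv_pow, sq (μ.real s), mul_inv, mul_assoc] at hjensen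
  have hscaled := le_of_mul_le_mul_left hjensen (inv_pos.2 hm)
  rwa [inv_mul_le_iff₀ hm] at hscaled

theorem sq_sub_le_mul_setIntegral_deriv_sq {u : ℝ → ℝ} {a b : ℝ} (hab : a ≤ b)
    (hcont : ContinuousOn u (Icc a b)) (hdiff : ∀ x ∈ Ioo a b, DifferentiableAt ℝ u x)
    (hu' : IntegrableOn (fun x => deriv u x ^ 2) (Ioc a b)) :
    (u b - u a) ^ 2 ≤ (b - a) * ∫ x in Ioc a b, deriv u x ^ 2 := by
  have : IsFiniteMeasure (volume.restrict (Ioc a b)) := by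
    rw [isFiniteMeasure_restrict]; exact measure_Ioc_lt_top.ne
  have hint : IntegrableOn (deriv u) (Ioc a b) :=
    ((memLp_two_iff_integrable_sq (measurable_deriv u).aestronglyMeasurable).2 hu').integrable
      one_le_two
  rw [← intervalIntegral.integral_eq_sub_of_hasDerivAt_of_le hab hcont
    (fun x hx => (hdiff x hx).hasDerivAt)
    ((intervalIntegrable_iff_integrableOn_Ioc_of_le hab).2 hint),
    intervalIntegral.integral_of_le hab]
  simpa [Real.volume_real_Ioc, hab] using sq_setIntegral_le_measureReal_mul_setIntegral_sq
    measure_Ioc_lt_top.ne hu'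

theorem sq_sub_le_mul_setIntegral_deriv_sq_of_mem {u : ℝ → ℝ} {a b x : ℝ}
    (hu : DifferentiableOn ℝ u (Icc a b))
    (hu' : IntegrableOn (fun x => deriv u x ^ 2) (Ioo a b)) (hx : x ∈ Icc a b) :
    (u x - u a) ^ 2 ≤ (b - a) * ∫ t in Ioo a b, deriv u t ^ 2 := by
  have hsub : Ioc a x ⊆ Ioc a b := Ioc_subset_Ioc_right hx.2
  have hu'Ioc : IntegrableOn (fun x => deriv u x ^ 2) (Ioc a b) :=
    (integrableOn_Ioc_iff_integrableOn_Ioo).2 hu'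
  calc (u x - u a) ^ 2 ≤ (x - a) * ∫ t in Ioc a x, deriv u t ^ 2 :=
        sq_sub_le_mul_setIntegral_deriv_sq hx.1
          (hu.continuousOn.mono (Icc_subset_Icc_right hx.2))
          (fun t ht => hu.differentiableAt (Icc_mem_nhds ht.1 (ht.2.trans_le hx.2)))
          (hu'Ioc.mono_set hsub)
    _ ≤ (b - a) * ∫ t in Ioc a b, deriv u t ^ 2 := by
        refine mul_le_mul (by linarith [hx.2]) ?_ (integral_nonneg fun t => sq_nonneg _)
          (by linarith [hx.1, hx.2])
        exact setIntegral_mono_set hu'Ioc (.of_forall fun t => sq_nonneg _) hsub.eventuallyLE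
    _ = (b - a) * ∫ t in Ioo a b, deriv u t ^ 2 := by rw [integral_Ioc_eq_integral_Ioo]

theorem setIntegral_mul_le_of_setIntegral_eq_one {α : Type*} [MeasurableSpace α]
    {μ : Measure α} {s : Set α} (hs : MeasurableSet s) {ρ f : α → ℝ} {M : ℝ}
    (hρ : ∀ x ∈ s, 0 ≤ ρ x) (hmass : ∫ x in s, ρ x ∂μ = 1)
    (hf : AEStronglyMeasurable f (μ.restrict s)) (hfM : ∀ x ∈ s, |f x| ≤ M) :
    ∫ x in s, ρ x * f x ∂μ ≤ M := by
  have hρi : IntegrableOn ρ s μ :=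
    Integrable.of_integral_ne_zero (by rw [hmass]; exact one_ne_zero)
  have hρf : IntegrableOn (fun x => ρ x * f x) s μ :=
    hρi.mul_bdd hf ((ae_restrict_iff' hs).2 (.of_forall hfM))
  calc ∫ x in s, ρ x * f x ∂μ ≤ ∫ x in s, ρ x * M ∂μ :=
        setIntegral_mono_on hρf (hρi.mul_const M) hs fun x hx =>
          mul_le_mul_of_nonneg_left ((le_abs_self _).trans (hfM x hx)) (hρ x hx)
    _ = M := by rw [integral_mul_const, hmass, one_mul]

theorem stmt5_general (ρ u : ℝ → ℝ) (ρbar : ℝ)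
    (hρnn : ∀ x ∈ Ioo (0:ℝ) 1, 0 ≤ ρ x)
    (hρbd : ∀ x ∈ Ioo (0:ℝ) 1, ρ x ≤ ρbar)
    (hmass : ∫ x in Ioo (0:ℝ) 1, ρ x = 1)
    (hu : DifferentiableOn ℝ u (Icc 0 1))
    (hu0 : u 0 = 0)
    (hu'int : IntegrableOn (fun x => (deriv u x) ^ 2) (Ioo 0 1)) :
    (∫ x in Ioo (0:ℝ) 1, ρ x * (u x) ^ 2) ^ ((1:ℝ)/2) ≤
      (Real.sqrt ρbar + ρbar) * (∫ x in Ioo (0:ℝ) 1, (deriv u x) ^ 2) ^ ((1:ℝ)/2) := by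
  set C := ∫ x in Ioo (0:ℝ) 1, (deriv u x) ^ 2
  have hu_sq : ∀ x ∈ Ioo (0:ℝ) 1, |u x ^ 2| ≤ C := fun x hx => by
    simpa [hu0] using sq_sub_le_mul_setIntegral_deriv_sq_of_mem hu hu'int (Ioo_subset_Icc_self hx)
  have hweighted : ∫ x in Ioo (0:ℝ) 1, ρ x * u x ^ 2 ≤ C :=
    setIntegral_mul_le_of_setIntegral_eq_one measurableSet_Ioo hρnn hmass
      ((hu.continuousOn.mono Ioo_subset_Icc_self).pow 2 |>.aestronglyMeasurable measurableSet_Ioo)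
      hu_sq
  have hρbar : 1 ≤ ρbar := by
    have hρint : IntegrableOn ρ (Ioo 0 1) := .of_integral_ne_zero (by simp [hmass])
    simpa [hmass] using setIntegral_mono_on hρint (integrable_const ρbar) measurableSet_Ioo hρbd
  calc (∫ x in Ioo (0:ℝ) 1, ρ x * u x ^ 2) ^ ((1:ℝ)/2) ≤ C ^ ((1:ℝ)/2) :=
        rpow_le_rpow (setIntegral_nonneg measurableSet_Ioo fun x hx =>
          mul_nonneg (hρnn x hx) (sq_nonneg _)) hweighted (by norm_num)
    _ ≤ (Real.sqrt ρbar + ρbar) * C ^ ((1:ℝ)/2) :=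
        le_mul_of_one_le_left (rpow_nonneg (integral_nonneg fun x => sq_nonneg _) _)
          (by linarith [one_le_sqrt.2 hρbar])

/-- weighted Poincaré estimate (5.6): if `0 ≤ ρ ≤ ρ̄` has unit mass and zero
momentum on `Ω = (0,1)` and `u ∈ H¹₀(Ω)`, then
`‖√ρ u‖_{L²} ≤ (√ρ̄ + ρ̄)‖∂ₓu‖_{L²}`. -/
theorem stmt5 (ρ u : ℝ → ℝ) (ρbar : ℝ)
    (hρmeas : AEStronglyMeasurable ρ (volume.restrict (Ioo 0 1)))
    (hρnn : ∀ x ∈ Ioo (0:ℝ) 1, 0 ≤ ρ x)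
    (hρbd : ∀ x ∈ Ioo (0:ℝ) 1, ρ x ≤ ρbar)
    (hmass : ∫ x in Ioo (0:ℝ) 1, ρ x = 1)
    (hmom : ∫ x in Ioo (0:ℝ) 1, ρ x * u x = 0)
    (hu : DifferentiableOn ℝ u (Icc 0 1))
    (hu0 : u 0 = 0) (hu1 : u 1 = 0)
    (hu'int : IntegrableOn (fun x => (deriv u x) ^ 2) (Ioo 0 1)) :
    (∫ x in Ioo (0:ℝ) 1, ρ x * (u x) ^ 2) ^ ((1:ℝ)/2) ≤
      (Real.sqrt ρbar + ρbar) * (∫ x in Ioo (0:ℝ) 1, (deriv u x) ^ 2) ^ ((1:ℝ)/2) :=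
  stmt5_general ρ u ρbar hρnn hρbd hmass hu hu0 hu'int
end

section
/- Let Ω = (0,1), ρ̄ > 0, and suppose ρ ∈ L^∞(Ω) with 0 ≤ ρ ≤ ρ̄, ∫₀¹ ρ dx = 1, and u ∈ H¹₀(Ω). Then ∫₀¹ ρ u⁴ dx ≤ 4ρ̄² ∫₀¹ u²(∂ₓu)² dx + (∫₀¹ ρ u² dx)². -/
/-!
Since `u` vanishes at the left endpoint, `u x ^ 2 = ∫ₐˣ 2 u u'`, so `u ^ 2 ≤ 2C` pointwise with
`C = ∫ |u u'|`. Hence `∫ ρ u⁴ ≤ 2 C ∫ ρ u²`, and the weighted AM-GM inequality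
`2 A |u u'| ≤ (b - a) (u u')² + A² / (b - a)`, integrated over `(a, b)`, bounds this by
`(b - a) ∫ u² u'² + A²` with `A = ∫ ρ u²`. On `(0, 1)` the unit mass forces `ρ̄ ≥ 1`.
-/

open Real Set MeasureTheory

lemma two_mul_mul_le_mul_sq_add_sq_div {t : ℝ} (ht : 0 < t) (x y : ℝ) :
    2 * x * y ≤ t * y ^ 2 + x ^ 2 / t := by
  have hsq : t * y ^ 2 + x ^ 2 / t - 2 * x * y = (t * y - x) ^ 2 / t := by
    field_simp
    ring
  linarith [div_nonneg (sq_nonneg (t * y - x)) ht.le]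

section

variable {u : ℝ → ℝ} {a b : ℝ}

lemma integrableOn_mul_deriv_of_integrableOn_sq_mul_sq (hc : ContinuousOn u (Icc a b))
    (hint : IntegrableOn (fun x => u x ^ 2 * deriv u x ^ 2) (Ioo a b)) :
    IntegrableOn (fun x => u x * deriv u x) (Ioo a b) := by
  have : IsFiniteMeasure (volume.restrict (Ioo a b)) := by
    rw [isFiniteMeasure_restrict]; exact measure_Ioo_lt_top.ne
  have hmeas : AEStronglyMeasurable (fun x => u x * deriv u x) (volume.restrict (Ioo a b)) :=
    ((hc.mono Ioo_subset_Icc_self).aestronglyMeasurable measurableSet_Ioo).mul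
      (measurable_deriv u).aestronglyMeasurable
  refine ((memLp_two_iff_integrable_sq hmeas).2 ?_).integrable one_le_two
  simp_rw [mul_pow]
  exact hint

lemma sq_le_two_mul_setIntegral_abs_mul_deriv (hc : ContinuousOn u (Icc a b))
    (hd : DifferentiableOn ℝ u (Ioo a b)) (ha : u a = 0)
    (hint : IntegrableOn (fun x => u x * deriv u x) (Ioo a b)) {x : ℝ} (hx : x ∈ Ioo a b) :
    u x ^ 2 ≤ 2 * ∫ t in Ioo a b, |u t * deriv u t| := by
  have hsub : Ioc a x ⊆ Ioo a b := Ioc_subset_Ioo_right hx.2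
  have hint' : IntervalIntegrable (fun t => u t * deriv u t) volume a x :=
    (intervalIntegrable_iff_integrableOn_Ioc_of_le hx.1.le).2 (hint.mono_set hsub)
  have hderiv : ∀ t ∈ Ioo a x, HasDerivAt (fun t => u t ^ 2) (2 * (u t * deriv u t)) t := by
    intro t ht
    have ht' : t ∈ Ioo a b := ⟨ht.1, ht.2.trans hx.2⟩
    simpa [mul_assoc] using
      ((hd t ht').differentiableAt (isOpen_Ioo.mem_nhds ht')).hasDerivAt.fun_pow 2
  calc u x ^ 2 = ∫ t in a..x, 2 * (u t * deriv u t) := by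
        rw [intervalIntegral.integral_eq_sub_of_hasDerivAt_of_le hx.1.le
          ((hc.mono (Icc_subset_Icc_right hx.2.le)).pow 2) hderiv (hint'.const_mul 2), Pi.pow_apply,
          Pi.pow_apply, ha]
        ring
    _ ≤ ∫ t in a..x, 2 * |u t * deriv u t| :=
        intervalIntegral.integral_mono_on hx.1.le (hint'.const_mul 2) (hint'.abs.const_mul 2)
          fun t _ => by gcongr; exact le_abs_self _
    _ = 2 * ∫ t in Ioc a x, |u t * deriv u t| := by
        rw [intervalIntegral.integral_const_mul, intervalIntegral.integral_of_le hx.1.le]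
    _ ≤ 2 * ∫ t in Ioo a b, |u t * deriv u t| := mul_le_mul_of_nonneg_left
        (setIntegral_mono_set hint.abs (.of_forall fun t => abs_nonneg _) hsub.eventuallyLE)
        zero_le_two

theorem setIntegral_mul_pow_four_le {ρ : ℝ → ℝ} (hab : a < b) (hρ : IntegrableOn ρ (Ioo a b))
    (hρ0 : ∀ x ∈ Ioo a b, 0 ≤ ρ x) (hc : ContinuousOn u (Icc a b))
    (hd : DifferentiableOn ℝ u (Ioo a b)) (ha : u a = 0)
    (hint : IntegrableOn (fun x => u x ^ 2 * deriv u x ^ 2) (Ioo a b)) :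
    ∫ x in Ioo a b, ρ x * u x ^ 4 ≤
      (b - a) * (∫ x in Ioo a b, u x ^ 2 * deriv u x ^ 2) + (∫ x in Ioo a b, ρ x * u x ^ 2) ^ 2 := by
  have huu' := integrableOn_mul_deriv_of_integrableOn_sq_mul_sq hc hint
  set C := ∫ x in Ioo a b, |u x * deriv u x|
  set A := ∫ x in Ioo a b, ρ x * u x ^ 2
  have hbound : ∀ x ∈ Ioo a b, u x ^ 2 ≤ 2 * C := fun x hx =>
    sq_le_two_mul_setIntegral_abs_mul_deriv hc hd ha huu' hx
  have hbound_ae : ∀ᵐ x ∂volume.restrict (Ioo a b), ‖u x ^ 2‖ ≤ 2 * C := by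
    filter_upwards [ae_restrict_mem measurableSet_Ioo] with x hx
    rw [Real.norm_of_nonneg (sq_nonneg _)]
    exact hbound x hx
  have hu2 : AEStronglyMeasurable (fun x => u x ^ 2) (volume.restrict (Ioo a b)) :=
    ((hc.mono Ioo_subset_Icc_self).aestronglyMeasurable measurableSet_Ioo).pow 2
  have hρu2 : IntegrableOn (fun x => ρ x * u x ^ 2) (Ioo a b) := hρ.mul_bdd hu2 hbound_ae
  have hρu4 : IntegrableOn (fun x => ρ x * u x ^ 4) (Ioo a b) := by
    have := hρu2.mul_bdd hu2 hbound_ae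
    simp_rw [mul_assoc, ← pow_add] at this
    exact this
  have hvol : volume.real (Ioo a b) = b - a := by simp [hab.le]
  calc ∫ x in Ioo a b, ρ x * u x ^ 4
      ≤ ∫ x in Ioo a b, 2 * C * (ρ x * u x ^ 2) := by
        refine setIntegral_mono_on hρu4 (hρu2.const_mul _) measurableSet_Ioo fun x hx => ?_
        have := mul_le_mul_of_nonneg_left (hbound x hx) (mul_nonneg (hρ0 x hx) (sq_nonneg (u x)))
        linarith
    _ = ∫ x in Ioo a b, 2 * A * |u x * deriv u x| := by
        rw [integral_const_mul, integral_const_mul]; ring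
    _ ≤ ∫ x in Ioo a b, ((b - a) * (u x ^ 2 * deriv u x ^ 2) + A ^ 2 / (b - a)) := by
        refine setIntegral_mono_on (huu'.abs.const_mul _)
          ((hint.const_mul _).add (integrableOn_const measure_Ioo_lt_top.ne)) measurableSet_Ioo
          fun x _ => ?_
        rw [← mul_pow, ← sq_abs (u x * deriv u x)]
        exact two_mul_mul_le_mul_sq_add_sq_div (sub_pos.2 hab) _ _
    _ = (b - a) * (∫ x in Ioo a b, u x ^ 2 * deriv u x ^ 2) + A ^ 2 := by
        rw [integral_add (hint.const_mul _) (integrableOn_const measure_Ioo_lt_top.ne),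
          integral_const_mul, setIntegral_const, hvol, smul_eq_mul]
        field_simp [(sub_pos.2 hab).ne']

end

theorem stmt15_general (ρ u : ℝ → ℝ) (ρbar : ℝ)
    (hρbd : ∀ x ∈ Ioo (0:ℝ) 1, 0 ≤ ρ x ∧ ρ x ≤ ρbar)
    (hmass : ∫ x in Ioo (0:ℝ) 1, ρ x = 1)
    (hu : DifferentiableOn ℝ u (Icc 0 1))
    (hu0 : u 0 = 0)
    (hint : IntegrableOn (fun x => (u x) ^ 2 * (deriv u x) ^ 2) (Ioo 0 1)) :
    ∫ x in Ioo (0:ℝ) 1, ρ x * (u x) ^ 4 ≤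
      4 * ρbar ^ 2 * (∫ x in Ioo (0:ℝ) 1, (u x) ^ 2 * (deriv u x) ^ 2) +
      (∫ x in Ioo (0:ℝ) 1, ρ x * (u x) ^ 2) ^ 2 := by
  have hρ : IntegrableOn ρ (Ioo 0 1) := Integrable.of_integral_ne_zero (by simp [hmass])
  have hρbar : 1 ≤ ρbar := by
    have := norm_setIntegral_le_of_norm_le_const (μ := volume) measure_Ioo_lt_top fun x hx =>
      (Real.norm_of_nonneg (hρbd x hx).1).trans_le (hρbd x hx).2
    simpa [hmass] using this
  have hB : 0 ≤ ∫ x in Ioo (0:ℝ) 1, (u x) ^ 2 * (deriv u x) ^ 2 :=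
    setIntegral_nonneg measurableSet_Ioo fun x _ => by positivity
  have key := setIntegral_mul_pow_four_le zero_lt_one hρ (fun x hx => (hρbd x hx).1)
    hu.continuousOn (hu.mono Ioo_subset_Icc_self) hu0 hint
  rw [sub_zero, one_mul] at key
  refine key.trans ?_
  gcongr
  exact le_mul_of_one_le_left hB (by nlinarith)

/-- interpolation inequality
`∫ρu⁴ ≤ 4ρ̄²∫u²(∂ₓu)² + (∫ρu²)²` on `(0,1)` for a density `0 ≤ ρ ≤ ρ̄` of unit mass and
`u ∈ H¹₀(0,1)`. -/
theorem stmt15 (ρ u : ℝ → ℝ) (ρbar : ℝ) (hρbar : 0 < ρbar)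
    (hρmeas : AEStronglyMeasurable ρ (volume.restrict (Ioo 0 1)))
    (hρbd : ∀ x ∈ Ioo (0:ℝ) 1, 0 ≤ ρ x ∧ ρ x ≤ ρbar)
    (hmass : ∫ x in Ioo (0:ℝ) 1, ρ x = 1)
    (hu : DifferentiableOn ℝ u (Icc 0 1))
    (hu0 : u 0 = 0) (hu1 : u 1 = 0)
    (hint : IntegrableOn (fun x => (u x) ^ 2 * (deriv u x) ^ 2) (Ioo 0 1)) :
    ∫ x in Ioo (0:ℝ) 1, ρ x * (u x) ^ 4 ≤
      4 * ρbar ^ 2 * (∫ x in Ioo (0:ℝ) 1, (u x) ^ 2 * (deriv u x) ^ 2) +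
      (∫ x in Ioo (0:ℝ) 1, ρ x * (u x) ^ 2) ^ 2 :=
  stmt15_general ρ u ρbar hρbd hmass hu hu0 hint
end

section
/- Let u : [0,T] × [0,1] → ℝ and define the Lagrangian flow ξ(y,t) by ∂ₜξ = u(ξ,t), ξ(y,0) = y, and set η(y,t) = ∂_y ξ(y,t), ũ(y,t) = u(ξ(y,t),t). Suppose ∫₀ᵀ ‖∂ₓu(t,·)‖_{L^∞} dt = θ < 1/2. Then η(y,t) = 1 + ∫₀ᵗ ∂_y ũ(y,τ) dτ, and ∫₀ᵀ ‖∂_y ũ(t,·)‖_{L^∞} dt ≤ θ/(1−θ) < 1. -/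
/-!
The difference `f = ξ(a, ·) - ξ(b, ·)` of two trajectories satisfies `|f'| ≤ m |f|`.
At a maximum point `t₀` of `|f|` on `[0, T]` the integral form gives
`|f t₀| ≤ |a - b| + (∫₀ᵀ m) |f t₀|`, so `ξ(·, t)` is `1/(1-θ)`-Lipschitz. Hence
`|η| ≤ 1/(1-θ)` and `|∂_y ũ| = |∂ₓu ∘ ξ| |η| ≤ m/(1-θ)`, which integrates to `θ/(1-θ)`.
The same Lipschitz bound dominates the difference quotients of the integral form of
`ξ(z, t) - ξ(y, t)`, so dominated convergence differentiates it in `z`, giving the formula for `η`.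
-/

open Real Set MeasureTheory Filter
open scoped Interval

theorem abs_sub_le_of_abs_deriv_le {g : ℝ → ℝ} {C : ℝ} (hg : Differentiable ℝ g)
    (hC : ∀ x, |deriv g x| ≤ C) (a b : ℝ) : |g a - g b| ≤ C * |a - b| := by
  simpa only [Real.norm_eq_abs] using
    convex_univ.norm_image_sub_le_of_norm_deriv_le (fun x _ => hg x) (fun x _ => hC x)
      (mem_univ b) (mem_univ a)

theorem intervalIntegral.integral_deriv_eq_sub_of_abs_deriv_le {f g : ℝ → ℝ} {a b : ℝ}
    (hab : a ≤ b) (hf : ∀ t ∈ Icc a b, DifferentiableAt ℝ f t)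
    (hg : IntegrableOn g (Icc a b)) (hfg : ∀ t ∈ Icc a b, |deriv f t| ≤ g t) :
    ∫ t in a..b, deriv f t = f b - f a := by
  refine intervalIntegral.integral_deriv_eq_sub (by rwa [uIcc_of_le hab]) ?_
  rw [intervalIntegrable_iff_integrableOn_Icc_of_le hab]
  refine hg.mono' (measurable_deriv f).aestronglyMeasurable ?_
  exact (ae_restrict_iff' measurableSet_Icc).2 (Eventually.of_forall hfg)

theorem abs_le_div_one_sub_of_abs_deriv_le {f m : ℝ → ℝ} {T θ t : ℝ}
    (hf : ∀ s ∈ Icc 0 T, DifferentiableAt ℝ f s) (hm : IntegrableOn m (Icc 0 T))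
    (hm0 : ∀ s ∈ Icc 0 T, 0 ≤ m s) (hmθ : ∫ s in 0..T, m s ≤ θ) (hθ : θ < 1)
    (hfm : ∀ s ∈ Icc 0 T, |deriv f s| ≤ m s * |f s|) (ht : t ∈ Icc 0 T) :
    |f t| ≤ |f 0| / (1 - θ) := by
  have hcont : ContinuousOn (fun s => |f s|) (Icc 0 T) :=
    continuous_abs.comp_continuousOn fun s hs => (hf s hs).continuousAt.continuousWithinAt
  obtain ⟨t₀, ht₀, hmax⟩ := isCompact_Icc.exists_isMaxOn ⟨t, ht⟩ hcont
  set S := |f t₀|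
  have hsub : Icc 0 t₀ ⊆ Icc 0 T := Icc_subset_Icc le_rfl ht₀.2
  have hmS : IntegrableOn (fun s => m s * S) (Icc 0 t₀) := (hm.mono_set hsub).mul_const S
  have hbound : ∀ s ∈ Icc 0 t₀, |deriv f s| ≤ m s * S := fun s hs =>
    (hfm s (hsub hs)).trans (mul_le_mul_of_nonneg_left (hmax (hsub hs)) (hm0 s (hsub hs)))
  have hmt₀ : ∫ s in 0..t₀, m s ≤ θ := by
    refine le_trans (intervalIntegral.integral_mono_interval le_rfl ht₀.1 ht₀.2 ?_ ?_) hmθ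
    · exact (ae_restrict_iff' measurableSet_Ioc).2
        (Eventually.of_forall fun s hs => hm0 s (Ioc_subset_Icc_self hs))
    · exact (intervalIntegrable_iff_integrableOn_Icc_of_le (ht₀.1.trans ht₀.2)).2 hm
  have hS : S ≤ |f 0| + θ * S :=
    calc S = |f 0 + ∫ s in 0..t₀, deriv f s| := by
          rw [intervalIntegral.integral_deriv_eq_sub_of_abs_deriv_le ht₀.1
            (fun s hs => hf s (hsub hs)) hmS hbound, add_sub_cancel]
      _ ≤ |f 0| + ∫ s in 0..t₀, m s * S := by
          refine (abs_add_le _ _).trans (add_le_add le_rfl ?_)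
          refine intervalIntegral.norm_integral_le_of_norm_le (f := deriv f) ht₀.1
            (Eventually.of_forall fun s hs => hbound s (Ioc_subset_Icc_self hs)) ?_
          exact (intervalIntegrable_iff_integrableOn_Icc_of_le ht₀.1).2 hmS
      _ ≤ |f 0| + θ * S := by
          rw [intervalIntegral.integral_mul_const]
          gcongr
  rw [le_div_iff₀ (by linarith)]
  calc |f t| * (1 - θ) ≤ S * (1 - θ) := mul_le_mul_of_nonneg_right (hmax ht) (by linarith)
    _ ≤ |f 0| := by linarith

/-- Unlike `intervalIntegral.hasDerivAt_integral_of_dominated_loc_of_lip`, this needs no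
measurability of `F'`: dominated convergence of the difference quotients provides it. -/
theorem hasDerivAt_intervalIntegral_of_abs_sub_le {F : ℝ → ℝ → ℝ} {F' bound : ℝ → ℝ}
    {y₀ a b : ℝ} (hF_meas : ∀ y, AEStronglyMeasurable (F y) (volume.restrict (Ι a b)))
    (hF_int : IntervalIntegrable (F y₀) volume a b)
    (hF_le : ∀ y, ∀ τ ∈ Ι a b, |F y τ - F y₀ τ| ≤ bound τ * |y - y₀|)
    (hbound : IntervalIntegrable bound volume a b)
    (hF' : ∀ τ ∈ Ι a b, HasDerivAt (F · τ) (F' τ) y₀) :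
    HasDerivAt (fun y => ∫ τ in a..b, F y τ) (∫ τ in a..b, F' τ) y₀ := by
  have hF_sub_int : ∀ y, IntervalIntegrable (fun τ => F y τ - F y₀ τ) volume a b := by
    intro y
    rw [intervalIntegrable_iff] at hbound ⊢
    refine (hbound.mul_const |y - y₀|).mono' ((hF_meas y).sub (hF_meas y₀)) ?_
    exact (ae_restrict_iff' measurableSet_uIoc).2 (Eventually.of_forall (hF_le y))
  have hslope : slope (fun y => ∫ τ in a..b, F y τ) y₀
      = fun y => ∫ τ in a..b, slope (F · τ) y₀ y := by
    funext y
    have hF_int_y : IntervalIntegrable (F y) volume a b := by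
      simpa using (hF_sub_int y).add hF_int
    simp only [slope_def_field]
    rw [intervalIntegral.integral_div, intervalIntegral.integral_sub hF_int_y hF_int]
  rw [hasDerivAt_iff_tendsto_slope, hslope]
  refine intervalIntegral.tendsto_integral_filter_of_dominated_convergence bound ?_ ?_ hbound ?_
  · refine Eventually.of_forall fun y => ?_
    simp only [slope_def_field, div_eq_mul_inv]
    exact ((hF_meas y).sub (hF_meas y₀)).mul_const _
  · filter_upwards [self_mem_nhdsWithin] with y hy
    refine Eventually.of_forall fun τ hτ => ?_
    have hyy₀ : 0 < |y - y₀| := abs_pos.2 (sub_ne_zero.2 hy)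
    rw [slope_def_field, Real.norm_eq_abs, abs_div, div_le_iff₀ hyy₀]
    exact hF_le y τ hτ
  · exact Eventually.of_forall fun τ hτ => hasDerivAt_iff_tendsto_slope.1 (hF' τ hτ)

structure IsFlowWithSmallGradient (u ξ : ℝ → ℝ → ℝ) (m : ℝ → ℝ) (T θ : ℝ) : Prop where
  hasDerivAt : ∀ y t, HasDerivAt (ξ y) (u t (ξ y t)) t
  flow_zero : ∀ y, ξ y 0 = y
  differentiable_velocity : ∀ t, Differentiable ℝ (u t)
  abs_deriv_velocity_le : ∀ t ∈ Icc 0 T, ∀ x, |deriv (u t) x| ≤ m t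
  nonneg : ∀ t ∈ Icc 0 T, 0 ≤ m t
  integrableOn : IntegrableOn m (Icc 0 T)
  integral_le : ∫ t in 0..T, m t ≤ θ
  lt_one : θ < 1

namespace IsFlowWithSmallGradient

variable {u ξ : ℝ → ℝ → ℝ} {m : ℝ → ℝ} {T θ t y : ℝ}

theorem abs_flow_sub_le (h : IsFlowWithSmallGradient u ξ m T θ) (a b : ℝ) (ht : t ∈ Icc 0 T) :
    |ξ a t - ξ b t| ≤ |a - b| / (1 - θ) := by
  have hderiv : ∀ s, HasDerivAt (fun s => ξ a s - ξ b s) (u s (ξ a s) - u s (ξ b s)) s :=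
    fun s => (h.hasDerivAt a s).sub (h.hasDerivAt b s)
  have := abs_le_div_one_sub_of_abs_deriv_le (fun s _ => (hderiv s).differentiableAt)
    h.integrableOn h.nonneg h.integral_le h.lt_one (fun s hs => ?_) ht
  · simpa only [h.flow_zero] using this
  · rw [(hderiv s).deriv]
    exact abs_sub_le_of_abs_deriv_le (h.differentiable_velocity s)
      (h.abs_deriv_velocity_le s hs) _ _

theorem abs_velocity_flow_sub_le (h : IsFlowWithSmallGradient u ξ m T θ) (a b : ℝ)
    (ht : t ∈ Icc 0 T) : |u t (ξ a t) - u t (ξ b t)| ≤ m t / (1 - θ) * |a - b| :=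
  calc |u t (ξ a t) - u t (ξ b t)| ≤ m t * |ξ a t - ξ b t| :=
        abs_sub_le_of_abs_deriv_le (h.differentiable_velocity t)
          (h.abs_deriv_velocity_le t ht) _ _
    _ ≤ m t * (|a - b| / (1 - θ)) := by
        gcongr
        exacts [h.nonneg t ht, h.abs_flow_sub_le a b ht]
    _ = m t / (1 - θ) * |a - b| := by ring

theorem flow_sub_eq (h : IsFlowWithSmallGradient u ξ m T θ) (a b : ℝ) (ht : t ∈ Icc 0 T) :
    ξ a t - ξ b t = a - b + ∫ τ in 0..t, (u τ (ξ a τ) - u τ (ξ b τ)) := by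
  have hderiv : ∀ s, HasDerivAt (fun s => ξ a s - ξ b s) (u s (ξ a s) - u s (ξ b s)) s :=
    fun s => (h.hasDerivAt a s).sub (h.hasDerivAt b s)
  have hderiv_eq : deriv (fun s => ξ a s - ξ b s) = fun s => u s (ξ a s) - u s (ξ b s) :=
    funext fun s => (hderiv s).deriv
  have hsub : Icc 0 t ⊆ Icc 0 T := Icc_subset_Icc le_rfl ht.2
  have hftc := intervalIntegral.integral_deriv_eq_sub_of_abs_deriv_le
    (f := fun s => ξ a s - ξ b s) ht.1 (fun s _ => (hderiv s).differentiableAt)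
    ((h.integrableOn.mono_set hsub).div_const (1 - θ) |>.mul_const |a - b|)
    (fun s hs => hderiv_eq ▸ h.abs_velocity_flow_sub_le a b (hsub hs))
  rw [hderiv_eq] at hftc
  rw [hftc, h.flow_zero, h.flow_zero]
  ring

theorem abs_deriv_flow_le (h : IsFlowWithSmallGradient u ξ m T θ) (y : ℝ) (ht : t ∈ Icc 0 T) :
    |deriv (fun y' => ξ y' t) y| ≤ 1 / (1 - θ) := by
  have hθ : 0 < 1 - θ := by linarith [h.lt_one]
  refine norm_deriv_le_of_lip' (f := fun y' => ξ y' t) (by positivity)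
    (Eventually.of_forall fun z => ?_)
  rw [one_div_mul_eq_div]
  exact h.abs_flow_sub_le z y ht

theorem hasDerivAt_flow (h : IsFlowWithSmallGradient u ξ m T θ)
    (hξ : ∀ τ, DifferentiableAt ℝ (fun y' => ξ y' τ) y) (ht : t ∈ Icc 0 T) :
    HasDerivAt (fun y' => ξ y' t) (1 + ∫ τ in 0..t, deriv (fun y' => u τ (ξ y' τ)) y) y := by
  have hIoc : ∀ τ ∈ Ι 0 t, τ ∈ Icc 0 T := fun τ hτ => by
    rw [uIoc_of_le ht.1] at hτ
    exact ⟨hτ.1.le, hτ.2.trans ht.2⟩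
  have hmeas : ∀ z, Measurable fun τ => u τ (ξ z τ) := fun z => by
    rw [← funext fun τ => (h.hasDerivAt z τ).deriv]
    exact measurable_deriv (ξ z)
  have hintegral : HasDerivAt (fun z => ∫ τ in 0..t, (u τ (ξ z τ) - u τ (ξ y τ)))
      (∫ τ in 0..t, deriv (fun y' => u τ (ξ y' τ)) y) y := by
    refine hasDerivAt_intervalIntegral_of_abs_sub_le (bound := fun τ => m τ / (1 - θ))
      (fun z => ((hmeas z).sub (hmeas y)).aestronglyMeasurable) (by simp)
      (fun z τ hτ => by simpa using h.abs_velocity_flow_sub_le z y (hIoc τ hτ)) ?_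
      (fun τ _ => ((h.differentiable_velocity τ _).comp y (hξ τ)).hasDerivAt.sub_const _)
    exact (intervalIntegrable_iff_integrableOn_Icc_of_le ht.1).2
      ((h.integrableOn.mono_set (Icc_subset_Icc le_rfl ht.2)).div_const _)
  have hrepr : (fun z => ξ z t)
      = fun z => ξ y t + (z - y) + ∫ τ in 0..t, (u τ (ξ z τ) - u τ (ξ y τ)) :=
    funext fun z => by linarith [h.flow_sub_eq z y ht]
  rw [hrepr]
  exact (((hasDerivAt_id' y).sub_const y).const_add (ξ y t)).add hintegral

theorem abs_deriv_velocity_flow_le (h : IsFlowWithSmallGradient u ξ m T θ)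
    (hξ : DifferentiableAt ℝ (fun y' => ξ y' t) y) (ht : t ∈ Icc 0 T) :
    |deriv (fun y' => u t (ξ y' t)) y| ≤ m t / (1 - θ) := by
  have hchain : HasDerivAt (fun y' => u t (ξ y' t))
      (deriv (u t) (ξ y t) * deriv (fun y' => ξ y' t) y) y :=
    (h.differentiable_velocity t _).hasDerivAt.comp y hξ.hasDerivAt
  rw [hchain.deriv, abs_mul, ← mul_one_div]
  exact mul_le_mul (h.abs_deriv_velocity_le t ht _) (h.abs_deriv_flow_le y ht) (abs_nonneg _)
    (h.nonneg t ht)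

end IsFlowWithSmallGradient

theorem stmt17_general (T θ : ℝ) (hθ : θ < 1/2)
    (u ξ : ℝ → ℝ → ℝ) (m : ℝ → ℝ)
    (hflow : ∀ y t : ℝ, HasDerivAt (ξ y) (u t (ξ y t)) t)
    (hinit : ∀ y : ℝ, ξ y 0 = y)
    (hξdiff : ∀ t y : ℝ, DifferentiableAt ℝ (fun y' => ξ y' t) y)
    (hudiff : ∀ t : ℝ, Differentiable ℝ (u t))
    (hm : ∀ t ∈ Icc (0:ℝ) T, ∀ x : ℝ, |deriv (u t) x| ≤ m t)
    (hmnn : ∀ t, 0 ≤ m t)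
    (hmint : IntegrableOn m (Icc 0 T))
    (hθdef : (∫ t in (0:ℝ)..T, m t) = θ) :
    (∀ y : ℝ, ∀ t ∈ Icc (0:ℝ) T,
      deriv (fun y' => ξ y' t) y =
        1 + ∫ τ in (0:ℝ)..t, deriv (fun y' => u τ (ξ y' τ)) y) ∧
    ∃ M : ℝ → ℝ,
      (∀ t ∈ Icc (0:ℝ) T, ∀ y : ℝ, |deriv (fun y' => u t (ξ y' t)) y| ≤ M t) ∧
      (∫ t in (0:ℝ)..T, M t) ≤ θ / (1 - θ) ∧ θ / (1 - θ) < 1 := by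
  have h : IsFlowWithSmallGradient u ξ m T θ :=
    ⟨hflow, hinit, hudiff, hm, fun t _ => hmnn t, hmint, hθdef.le, by linarith⟩
  refine ⟨fun y t ht => (h.hasDerivAt_flow (fun τ => hξdiff τ y) ht).deriv,
    fun t => m t / (1 - θ), fun t ht y => h.abs_deriv_velocity_flow_le (hξdiff t y) ht, ?_, ?_⟩
  · rw [intervalIntegral.integral_div, hθdef]
  · rw [div_lt_one (by linarith)]
    linarith

/-- equivalence of Eulerian and Lagrangian velocity gradients on small time
intervals: for the flow `∂ₜξ = u(ξ,t)`, `ξ(y,0) = y`, if `∫₀ᵀ ‖∂ₓu(t)‖_∞ dt = θ < 1/2`,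
then `η = ∂_yξ` satisfies `η(y,t) = 1 + ∫₀ᵗ ∂_yũ(y,τ) dτ` with `ũ(y,t) = u(ξ(y,t),t)`,
and `∫₀ᵀ ‖∂_yũ(t)‖_∞ dt ≤ θ/(1−θ) < 1`. -/
theorem stmt17 (T θ : ℝ) (hT : 0 < T) (hθ0 : 0 ≤ θ) (hθ : θ < 1/2)
    (u ξ : ℝ → ℝ → ℝ) (m : ℝ → ℝ)
    (hflow : ∀ y t : ℝ, HasDerivAt (ξ y) (u t (ξ y t)) t)
    (hinit : ∀ y : ℝ, ξ y 0 = y)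
    (hξdiff : ∀ t y : ℝ, DifferentiableAt ℝ (fun y' => ξ y' t) y)
    (hudiff : ∀ t : ℝ, Differentiable ℝ (u t))
    (hm : ∀ t ∈ Icc (0:ℝ) T, ∀ x : ℝ, |deriv (u t) x| ≤ m t)
    (hmnn : ∀ t, 0 ≤ m t)
    (hmint : IntegrableOn m (Icc 0 T))
    (hθdef : (∫ t in (0:ℝ)..T, m t) = θ) :
    (∀ y : ℝ, ∀ t ∈ Icc (0:ℝ) T,
      deriv (fun y' => ξ y' t) y =
        1 + ∫ τ in (0:ℝ)..t, deriv (fun y' => u τ (ξ y' τ)) y) ∧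
    ∃ M : ℝ → ℝ,
      (∀ t ∈ Icc (0:ℝ) T, ∀ y : ℝ, |deriv (fun y' => u t (ξ y' t)) y| ≤ M t) ∧
      (∫ t in (0:ℝ)..T, M t) ≤ θ / (1 - θ) ∧ θ / (1 - θ) < 1 :=
  stmt17_general T θ hθ u ξ m hflow hinit hξdiff hudiff hm hmnn hmint hθdef
end
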